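/- arXiv:1504.07297 — 6 statements merged into one kernel-verified Lean document; each statement's English description precedes it below -/
import Mathlib

section
/- For every N ≥ 1, ∑_{π₁ ∈ S_N} ∑_{π₂ ∈ S_N} sgn(π₁) sgn(π₂) ∏_{i=0}^{N−1} binom(π₁(i)+π₂(i), π₁(i)) = N!. -/
open Finset

lemma key_nat (N a b : ℕ) (hb : b < N) :
    ∑ k ∈ Finset.range N, a.choose k * b.choose k = (a + b).choose b := by
  rw [Nat.add_choose_eq, Finset.Nat.sum_antidiagonal_eq_sum_range_succ_mk]
  rw [show ∑ k ∈ Finset.range (b+1), a.choose k * b.choose (b - k)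
      = ∑ k ∈ Finset.range (b+1), a.choose k * b.choose k from
    Finset.sum_congr rfl fun k hk => by
      rw [Nat.choose_symm (Nat.lt_succ_iff.mp (Finset.mem_range.mp hk))]]
  symm
  apply Finset.sum_subset (Finset.range_subset_range.mpr hb)
  intro k _ hk
  simp only [Finset.mem_range, not_lt] at hk
  have hz : b.choose k = 0 := Nat.choose_eq_zero_of_lt (by omega)
  rw [hz, mul_zero]

lemma pascal_det (N : ℕ) :
    (Matrix.of fun a b : Fin N => ((((a : ℕ) + (b : ℕ)).choose a : ℕ) : ℤ)).det = 1 := by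
  have hLU : (Matrix.of fun a b : Fin N => ((((a : ℕ) + (b : ℕ)).choose a : ℕ) : ℤ))
      = (Matrix.of fun a k : Fin N => (((a : ℕ).choose k : ℕ) : ℤ)) *
        (Matrix.of fun k b : Fin N => (((b : ℕ).choose k : ℕ) : ℤ)) := by
    ext a b
    simp only [Matrix.mul_apply, Matrix.of_apply]
    rw [Fin.sum_univ_eq_sum_range (fun k => (((a : ℕ).choose k : ℕ) : ℤ) * ((b : ℕ).choose k : ℤ))]
    rw [Nat.choose_symm_add, ← key_nat N a b b.isLt]
    push_cast
    rfl
  rw [hLU, Matrix.det_mul]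
  have hL : (Matrix.of fun a k : Fin N => (((a : ℕ).choose k : ℕ) : ℤ)).det = 1 := by
    rw [Matrix.det_of_lowerTriangular]
    · simp
    · intro i j hij
      simp only [OrderDual.toDual_lt_toDual] at hij
      simp [Nat.choose_eq_zero_of_lt hij]
  have hU : (Matrix.of fun k b : Fin N => (((b : ℕ).choose k : ℕ) : ℤ)).det = 1 := by
    rw [Matrix.det_of_upperTriangular]
    · simp
    · intro i j hij
      simp only [id] at hij
      simp [Nat.choose_eq_zero_of_lt hij]
  rw [hL, hU]; ring

theorem stmt2 (N : ℕ) (hN : 1 ≤ N) :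
    ∑ π₁ : Equiv.Perm (Fin N), ∑ π₂ : Equiv.Perm (Fin N),
      ((Equiv.Perm.sign π₁ : ℤ) * (Equiv.Perm.sign π₂ : ℤ)) *
        ∏ i : Fin N, (Nat.choose ((π₁ i : ℕ) + (π₂ i : ℕ)) (π₁ i : ℕ) : ℤ)
      = (N.factorial : ℤ) := by
  rw [Finset.sum_comm]
  have h1 : ∀ π₂ : Equiv.Perm (Fin N),
      (∑ π₁ : Equiv.Perm (Fin N),
        ((Equiv.Perm.sign π₁ : ℤ) * (Equiv.Perm.sign π₂ : ℤ)) *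
          ∏ i : Fin N, (Nat.choose ((π₁ i : ℕ) + (π₂ i : ℕ)) (π₁ i : ℕ) : ℤ))
      = (Matrix.of fun a b : Fin N => ((((a : ℕ) + (b : ℕ)).choose a : ℕ) : ℤ)).det := by
    intro π₂
    rw [Matrix.det_apply]
    rw [← Equiv.sum_comp (Equiv.mulRight π₂)
      (fun π₁ : Equiv.Perm (Fin N) =>
        ((Equiv.Perm.sign π₁ : ℤ) * (Equiv.Perm.sign π₂ : ℤ)) *
          ∏ i : Fin N, (Nat.choose ((π₁ i : ℕ) + (π₂ i : ℕ)) (π₁ i : ℕ) : ℤ))]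
    apply Finset.sum_congr rfl
    intro π _
    simp only [Equiv.coe_mulRight, Equiv.Perm.mul_apply, map_mul, Units.val_mul]
    have hsq : (Equiv.Perm.sign π₂ : ℤ) * (Equiv.Perm.sign π₂ : ℤ) = 1 := by
      rw [← Units.val_mul, Int.units_mul_self, Units.val_one]
    have hprod : (∏ i : Fin N, (Nat.choose ((π (π₂ i) : ℕ) + (π₂ i : ℕ)) (π (π₂ i) : ℕ) : ℤ))
        = ∏ j : Fin N, (Nat.choose ((π j : ℕ) + (j : ℕ)) (π j : ℕ) : ℤ) :=
      Equiv.prod_comp π₂ (fun j => (Nat.choose ((π j : ℕ) + (j : ℕ)) (π j : ℕ) : ℤ))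
    rw [hprod, Units.smul_def, zsmul_eq_mul,
      mul_assoc ((Equiv.Perm.sign π : ℤ)), hsq, mul_one]
    rfl
  calc ∑ π₂ : Equiv.Perm (Fin N), ∑ π₁ : Equiv.Perm (Fin N),
        ((Equiv.Perm.sign π₁ : ℤ) * (Equiv.Perm.sign π₂ : ℤ)) *
          ∏ i : Fin N, (Nat.choose ((π₁ i : ℕ) + (π₂ i : ℕ)) (π₁ i : ℕ) : ℤ)
      = ∑ _π₂ : Equiv.Perm (Fin N),
          (Matrix.of fun a b : Fin N => ((((a : ℕ) + (b : ℕ)).choose a : ℕ) : ℤ)).det :=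
        Finset.sum_congr rfl fun π₂ _ => h1 π₂
    _ = (N.factorial : ℤ) := by
        rw [pascal_det, Finset.sum_const, Finset.card_univ, Fintype.card_perm]
        simp [Fintype.card_fin]
end

section
/- For every n ≥ 1, every ω ∈ ℝ and every x ∈ ℂ, the Hankel-determinant form of the three-term recurrence holds: p̃_{n+1}(x; ω) h_{n−1}(ω)² = ( h_n(ω) h_{n−1}(ω) x + i ( h_n'(ω) h_{n−1}(ω) − h_{n−1}'(ω) h_n(ω) ) ) p̃_n(x; ω) − h_n(ω)² p̃_{n−1}(x; ω), where primes denote derivatives with respect to ω. -/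
/-
The determinant `p̃ₘ(x)`, expanded along its last column, is `∑ⱼ adj(Hₘ)ₘⱼ xʲ`, where `Hₘ` is
the Hankel matrix of the moments. Hence `adj(Hₘ) Hₘ = hₘ I` says that the moment functional
`L(xᵏ) = μₖ` satisfies `L(xⁱ p̃ₘ) = δᵢₘ hₘ` for `i ≤ m`, and the two top coefficients of `p̃ₘ₊₁`
are `hₘ` and `-gₘ`, where `gₘ` is `hₘ` with its last column shifted by one moment. The difference
`Q` of the two sides of the recurrence thus has degree `≤ n` and is `L`-orthogonal to
`1, …, xⁿ`, so `Hₙ` kills its coefficient vector, and multiplying by `adj(Hₙ)` gives `hₙ Q = 0`.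
This holds for every moment sequence in every commutative ring; applied to the moments
`μₖ + t δₖₙ` over `R[t]`, where `hₙ` becomes a polynomial in `t` whose leading coefficient is the
determinant `±1` of the antidiagonal matrix, it gives `Q = 0` identically, and `t = 0` gives the
recurrence. Finally `μₖ' = i μₖ₊₁` and Jacobi's formula give `hₘ' = i gₘ`.
-/

open MeasureTheory

/-- Moments of the oscillatory weight `e^{iωx}` on `[-1,1]`. -/
noncomputable def mu (ω : ℝ) (n : ℕ) : ℂ :=
  ∫ x : ℝ in (-1 : ℝ)..1, (x : ℂ) ^ n * Complex.exp (Complex.I * ω * x)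

/-- The `(n+1) × (n+1)` Hankel determinant of the moments. -/
noncomputable def hankel (n : ℕ) (ω : ℝ) : ℂ :=
  Matrix.det (Matrix.of fun j k : Fin (n + 1) => mu ω ((j : ℕ) + (k : ℕ)))

/-- The renormalized orthogonal polynomial `p̃_n(x; ω) = h_{n-1}(ω) p_n(x; ω)`,
as a Hankel-type determinant with last column `(1, x, …, x^n)`. -/
noncomputable def ptil (n : ℕ) (ω : ℝ) (x : ℂ) : ℂ :=
  Matrix.det (Matrix.of fun j k : Fin (n + 1) =>
    if (k : ℕ) = n then x ^ (j : ℕ) else mu ω ((j : ℕ) + (k : ℕ)))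

section Hankel

open Matrix Polynomial

variable {R : Type*} [CommRing R] (μ : ℕ → R)

def hankelMatrix (m : ℕ) : Matrix (Fin (m + 1)) (Fin (m + 1)) R :=
  Matrix.of fun j k => μ (j + k)

noncomputable def momentFunctional : R[X] →ₗ[R] R :=
  lsum fun k => LinearMap.mulRight R (μ k)

noncomputable def hankelPoly (m : ℕ) : R[X] :=
  ∑ j : Fin (m + 1), monomial j (adjugate (hankelMatrix μ m) (Fin.last m) j)

def hankelDetShift (m : ℕ) : R :=
  cramer (hankelMatrix μ m) (fun j => μ (j + m + 1)) (Fin.last m)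

lemma momentFunctional_monomial (k : ℕ) (a : R) :
    momentFunctional μ (monomial k a) = a * μ k := by
  simp [momentFunctional, sum_monomial_index]

lemma momentFunctional_C_mul (a : R) (p : R[X]) :
    momentFunctional μ (C a * p) = a * momentFunctional μ p := by
  rw [C_mul', map_smul, smul_eq_mul]

lemma momentFunctional_X_pow_mul {p : R[X]} {m : ℕ} (hp : p.natDegree ≤ m) (i : ℕ) :
    momentFunctional μ (X ^ i * p) = ∑ j : Fin (m + 1), p.coeff j * μ (i + j) := by
  conv_lhs => rw [p.as_sum_range' (m + 1) (Nat.lt_succ_of_le hp)]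
  simp [Finset.mul_sum, X_pow_mul_monomial, momentFunctional_monomial,
    Fin.sum_univ_eq_sum_range (fun j => p.coeff j * μ (i + j)), add_comm]

lemma coeff_hankelPoly (m : ℕ) (j : Fin (m + 1)) :
    (hankelPoly μ m).coeff j = adjugate (hankelMatrix μ m) (Fin.last m) j := by
  simp [hankelPoly, coeff_monomial, Fin.val_inj]

lemma natDegree_hankelPoly_le (m : ℕ) : (hankelPoly μ m).natDegree ≤ m :=
  natDegree_sum_le_of_forall_le _ _ fun j _ =>
    (natDegree_monomial_le _).trans (Nat.lt_succ_iff.1 j.2)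

lemma coeff_hankelPoly_of_lt {m k : ℕ} (h : m < k) : (hankelPoly μ m).coeff k = 0 :=
  coeff_eq_zero_of_natDegree_lt ((natDegree_hankelPoly_le μ m).trans_lt h)

lemma eval_hankelPoly (m : ℕ) (x : R) :
    (hankelPoly μ m).eval x = cramer (hankelMatrix μ m) (fun j => x ^ (j : ℕ)) (Fin.last m) := by
  simp [hankelPoly, eval_finsetSum, cramer_eq_adjugate_mulVec, mulVec, dotProduct]

lemma momentFunctional_X_pow_mul_hankelPoly {m i : ℕ} (hi : i ≤ m) :
    momentFunctional μ (X ^ i * hankelPoly μ m) =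
      if i = m then (hankelMatrix μ m).det else 0 := by
  rw [momentFunctional_X_pow_mul μ (natDegree_hankelPoly_le μ m)]
  calc ∑ j : Fin (m + 1), (hankelPoly μ m).coeff j * μ (i + j)
      = (adjugate (hankelMatrix μ m) * hankelMatrix μ m) (Fin.last m) ⟨i, by omega⟩ := by
        simp [mul_apply, coeff_hankelPoly, hankelMatrix, add_comm]
    _ = if i = m then (hankelMatrix μ m).det else 0 := by
        simp [adjugate_mul, one_apply, Fin.ext_iff, eq_comm]

lemma coeff_hankelPoly_top (m : ℕ) :
    (hankelPoly μ (m + 1)).coeff (m + 1) = (hankelMatrix μ m).det := by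
  have h := coeff_hankelPoly μ (m + 1) (Fin.last (m + 1))
  rwa [adjugate_fin_succ_eq_det_submatrix, Fin.succAbove_last, ← two_mul, pow_mul, neg_one_sq,
    one_pow, one_mul] at h

lemma coeff_hankelPoly_subtop (m : ℕ) :
    (hankelPoly μ (m + 1)).coeff m = -hankelDetShift μ m := by
  have h := coeff_hankelPoly μ (m + 1) (Fin.last m).castSucc
  rw [adjugate_fin_succ_eq_det_submatrix, Fin.succAbove_last, ← det_transpose] at h
  simp only [Fin.val_castSucc, Fin.val_last] at h
  rw [h, show m + (m + 1) = 2 * m + 1 by ring, pow_succ, pow_mul, neg_one_sq, one_pow, one_mul,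
    neg_one_mul, hankelDetShift, cramer_apply]
  congr 2
  ext j k
  rcases Fin.eq_castSucc_or_eq_last k with ⟨k, rfl⟩ | rfl
  · simp [hankelMatrix, Fin.succAbove_castSucc_of_lt, (Fin.castSucc_lt_last k).ne, add_comm]
  · simp [hankelMatrix, add_comm, add_left_comm, add_assoc]

lemma sum_det_updateCol_hankelMatrix (m : ℕ) :
    ∑ k : Fin (m + 1), ((hankelMatrix μ m).updateCol k fun j => μ (j + k + 1)).det =
      hankelDetShift μ m := by
  rw [Finset.sum_eq_single (Fin.last m), hankelDetShift, cramer_apply]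
  · rfl
  · intro k _ hk
    obtain ⟨k, rfl⟩ := Fin.exists_castSucc_eq.2 hk
    have hne := (Fin.castSucc_lt_succ (i := k)).ne
    refine det_zero_of_column_eq (i := k.castSucc) (j := k.succ) hne fun j => ?_
    simp [hankelMatrix, hne.symm, add_assoc]
  · simp

lemma C_det_hankelMatrix_mul_eq_zero_of_orthogonal {n : ℕ} {Q : R[X]} (hQ : Q.natDegree ≤ n)
    (horth : ∀ i ≤ n, momentFunctional μ (X ^ i * Q) = 0) :
    C (hankelMatrix μ n).det * Q = 0 := by
  set v : Fin (n + 1) → R := fun j => Q.coeff j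
  have hv : hankelMatrix μ n *ᵥ v = 0 := by
    ext i
    rw [Pi.zero_apply, ← horth i (by omega), momentFunctional_X_pow_mul μ hQ]
    simp [v, mulVec, dotProduct, hankelMatrix, mul_comm]
  have hdet : (hankelMatrix μ n).det • v = 0 := by
    rw [← one_mulVec v, ← smul_mulVec, ← adjugate_mul, ← mulVec_mulVec, hv, mulVec_zero]
  ext k
  rw [coeff_C_mul, coeff_zero]
  rcases le_or_gt k n with hk | hk
  · exact congrFun hdet ⟨k, by omega⟩
  · rw [coeff_eq_zero_of_natDegree_lt (by omega), mul_zero]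

lemma C_det_mul_hankelPoly_three_term_sub_eq_zero (n : ℕ) :
    C (hankelMatrix μ n).det * (C ((hankelMatrix μ n).det ^ 2) * hankelPoly μ (n + 2) -
      ((C ((hankelMatrix μ (n + 1)).det * (hankelMatrix μ n).det) * X -
          C (hankelDetShift μ (n + 1) * (hankelMatrix μ n).det -
            hankelDetShift μ n * (hankelMatrix μ (n + 1)).det)) * hankelPoly μ (n + 1) -
        C ((hankelMatrix μ (n + 1)).det ^ 2) * hankelPoly μ n)) = 0 := by
  set h₀ := (hankelMatrix μ n).det
  set h₁ := (hankelMatrix μ (n + 1)).det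
  set c := hankelDetShift μ (n + 1) * h₀ - hankelDetShift μ n * h₁
  apply C_det_hankelMatrix_mul_eq_zero_of_orthogonal
  · rw [natDegree_le_iff_coeff_eq_zero]
    rintro _ hk
    obtain ⟨k, rfl⟩ := Nat.exists_eq_add_of_lt hk
    simp only [sub_mul, mul_assoc, coeff_sub, coeff_C_mul, coeff_X_mul]
    rcases k with _ | _ | k
    · rw [coeff_hankelPoly_subtop, add_zero, coeff_hankelPoly_subtop, coeff_hankelPoly_top,
        coeff_hankelPoly_of_lt μ (by omega)]
      ring
    · rw [coeff_hankelPoly_top, coeff_hankelPoly_top,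
        coeff_hankelPoly_of_lt μ (m := n + 1) (by omega), coeff_hankelPoly_of_lt μ (m := n) (by omega)]
      ring
    · simp only [coeff_hankelPoly_of_lt μ (by omega : n + 2 < n + (k + 2) + 1),
        coeff_hankelPoly_of_lt μ (by omega : n + 1 < n + (k + 2)),
        coeff_hankelPoly_of_lt μ (by omega : n + 1 < n + (k + 2) + 1),
        coeff_hankelPoly_of_lt μ (by omega : n < n + (k + 2) + 1)]
      ring
  · intro i hi
    have expand : X ^ i * (C (h₀ ^ 2) * hankelPoly μ (n + 2) -
        ((C (h₁ * h₀) * X - C c) * hankelPoly μ (n + 1) - C (h₁ ^ 2) * hankelPoly μ n)) =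
        C (h₀ ^ 2) * (X ^ i * hankelPoly μ (n + 2)) -
          C (h₁ * h₀) * (X ^ (i + 1) * hankelPoly μ (n + 1)) + C c * (X ^ i * hankelPoly μ (n + 1)) + C (h₁ ^ 2) * (X ^ i * hankelPoly μ n) := by ring
    rw [expand]
    simp only [map_add, map_sub, momentFunctional_C_mul,
      momentFunctional_X_pow_mul_hankelPoly μ (show i ≤ n + 2 by omega),
      momentFunctional_X_pow_mul_hankelPoly μ (show i ≤ n + 1 by omega),
      momentFunctional_X_pow_mul_hankelPoly μ (show i + 1 ≤ n + 1 by omega),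
      momentFunctional_X_pow_mul_hankelPoly μ hi]
    split_ifs <;> first | omega | ring

variable {S : Type*} [CommRing S] (f : R →+* S)

lemma hankelMatrix_map (m : ℕ) : (hankelMatrix μ m).map f = hankelMatrix (f ∘ μ) m := rfl

lemma map_det_hankelMatrix (m : ℕ) : f (hankelMatrix μ m).det = (hankelMatrix (f ∘ μ) m).det := by
  rw [RingHom.map_det, RingHom.mapMatrix_apply, hankelMatrix_map]

lemma map_hankelDetShift (m : ℕ) : f (hankelDetShift μ m) = hankelDetShift (f ∘ μ) m := by
  rw [hankelDetShift, hankelDetShift, cramer_apply, cramer_apply, RingHom.map_det,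
    RingHom.mapMatrix_apply, map_updateCol, hankelMatrix_map]
  rfl

lemma map_hankelPoly (m : ℕ) : (hankelPoly μ m).map f = hankelPoly (f ∘ μ) m := by
  simp only [hankelPoly, Polynomial.map_sum, map_monomial, ← hankelMatrix_map,
    ← RingHom.mapMatrix_apply, ← RingHom.map_adjugate]
  rfl

lemma isUnit_det_hankelMatrix_single (n : ℕ) :
    IsUnit (hankelMatrix (Pi.single n (1 : R)) n).det := by
  have : hankelMatrix (Pi.single n (1 : R)) n =
      (Fin.revPerm : Equiv.Perm (Fin (n + 1))).permMatrix R := by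
    ext i j
    simp only [hankelMatrix, of_apply, Pi.single_apply, PEquiv.toMatrix_apply,
      Equiv.toPEquiv_apply, Fin.revPerm_apply, Option.mem_def, Option.some.injEq, Fin.ext_iff,
      Fin.val_rev]
    exact if_congr (by omega) rfl rfl
  rw [this, det_permutation]
  exact (Equiv.Perm.sign _).isUnit.map (Int.castRingHom R)

lemma isUnit_leadingCoeff_det_hankelMatrix_add_X_single [Nontrivial R] (n : ℕ) :
    IsUnit (hankelMatrix (fun k => X * C (Pi.single n 1 k) + C (μ k)) n).det.leadingCoeff := by
  have hX : hankelMatrix (fun k => X * C (Pi.single n 1 k) + C (μ k)) n =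
      (X : R[X]) • (hankelMatrix (Pi.single n 1) n).map C + (hankelMatrix μ n).map C := rfl
  have hu := isUnit_det_hankelMatrix_single (R := R) n
  have hcoeff := coeff_det_X_add_C_card (hankelMatrix (Pi.single n 1) n) (hankelMatrix μ n)
  have hdeg := natDegree_det_X_add_C_le (hankelMatrix (Pi.single n 1) n) (hankelMatrix μ n)
  rw [Fintype.card_fin] at hcoeff hdeg
  rwa [hX, leadingCoeff, natDegree_eq_of_le_of_coeff_ne_zero hdeg (hcoeff ▸ hu.ne_zero), hcoeff]

lemma eq_zero_of_C_mul_eq_zero {a : R[X]} (ha : IsUnit a.leadingCoeff) {Q : R[X][X]}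
    (h : C a * Q = 0) : Q = 0 :=
  Polynomial.ext fun k => (isUnit_leadingCoeff_mul_right_eq_zero_iff ha).1 <| by
    rw [← coeff_C_mul, h, coeff_zero]

theorem hankelPoly_three_term (n : ℕ) :
    C ((hankelMatrix μ n).det ^ 2) * hankelPoly μ (n + 2) =
      (C ((hankelMatrix μ (n + 1)).det * (hankelMatrix μ n).det) * X -
          C (hankelDetShift μ (n + 1) * (hankelMatrix μ n).det -
            hankelDetShift μ n * (hankelMatrix μ (n + 1)).det)) * hankelPoly μ (n + 1) -
        C ((hankelMatrix μ (n + 1)).det ^ 2) * hankelPoly μ n := by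
  nontriviality R
  set ν : ℕ → R[X] := fun k => X * C (Pi.single n 1 k) + C (μ k)
  have hν : evalRingHom 0 ∘ ν = μ := by
    funext k
    simp [ν]
  have hunit := isUnit_leadingCoeff_det_hankelMatrix_add_X_single μ n
  have hQ0 := eq_zero_of_C_mul_eq_zero hunit (C_det_mul_hankelPoly_three_term_sub_eq_zero ν n)
  have := congrArg (Polynomial.map (evalRingHom 0)) hQ0
  simp only [Polynomial.map_sub, Polynomial.map_mul, Polynomial.map_pow, Polynomial.map_C,
    Polynomial.map_X, Polynomial.map_zero, map_mul, map_sub, map_pow,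
    map_hankelPoly ν (evalRingHom 0), map_det_hankelMatrix ν (evalRingHom 0),
    map_hankelDetShift ν (evalRingHom 0), hν] at this
  simp only [map_mul, map_sub, map_pow]
  linear_combination this

end Hankel

theorem hasDerivAt_det {𝕜 𝔸 ι : Type*} [NontriviallyNormedField 𝕜] [NormedCommRing 𝔸]
    [NormedAlgebra 𝕜 𝔸] [Fintype ι] [DecidableEq ι] {A : 𝕜 → Matrix ι ι 𝔸} {A' : Matrix ι ι 𝔸}
    {t : 𝕜} (hA : ∀ i j, HasDerivAt (fun s => A s i j) (A' i j) t) :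
    HasDerivAt (fun s => (A s).det) (∑ j, ((A t).updateCol j fun i => A' i j).det) t := by
  simp only [Matrix.det_apply, Units.smul_def, zsmul_eq_mul]
  have hσ (σ : Equiv.Perm ι) := ((HasDerivAt.fun_finsetProd (u := Finset.univ)
    fun i _ => hA (σ i) i).const_mul (((Equiv.Perm.sign σ : ℤ) : 𝔸)))
  refine (HasDerivAt.fun_sum fun σ _ => hσ σ).congr_deriv ?_
  rw [Finset.sum_comm]
  refine Finset.sum_congr rfl fun σ _ => ?_
  rw [Finset.mul_sum]
  refine Finset.sum_congr rfl fun j _ => ?_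
  rw [← Finset.mul_prod_erase Finset.univ _ (Finset.mem_univ j), Matrix.updateCol_self,
    smul_eq_mul, mul_comm (A' _ _)]
  congr 2
  exact Finset.prod_congr rfl fun i hi => (Matrix.updateCol_ne (Finset.ne_of_mem_erase hi)).symm

open Complex in
lemma hasDerivAt_mu (k : ℕ) (ω : ℝ) :
    HasDerivAt (fun ω => mu ω k) (I * mu ω (k + 1)) ω := by
  have hderiv (t w : ℝ) : HasDerivAt (fun w : ℝ => (t : ℂ) ^ k * exp (I * w * t))
      (I * ((t : ℂ) ^ (k + 1) * exp (I * w * t))) w := by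
    refine ((((hasDerivAt_id w).ofReal_comp.const_mul I).mul_const (t : ℂ)).cexp.const_mul
      ((t : ℂ) ^ k)).congr_deriv ?_
    simp only [id, ofReal_one, mul_one]
    ring
  have hbound : ∀ᵐ t : ℝ, t ∈ Set.uIoc (-1 : ℝ) 1 → ∀ w ∈ (Set.univ : Set ℝ),
      ‖I * ((t : ℂ) ^ (k + 1) * exp (I * w * t))‖ ≤ 1 := by
    refine Filter.Eventually.of_forall fun t ht w _ => ?_
    rw [Set.uIoc_of_le (by norm_num)] at ht
    have hre : (I * w * t).re = 0 := by simp
    rw [norm_mul, norm_mul, norm_I, one_mul, norm_exp, hre, Real.exp_zero, mul_one, norm_pow,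
      norm_real, Real.norm_eq_abs]
    exact pow_le_one₀ (abs_nonneg t) (abs_le.2 ⟨ht.1.le, ht.2⟩)
  have h := (intervalIntegral.hasDerivAt_integral_of_dominated_loc_of_deriv_le (a := -1) (b := 1)
    (bound := fun _ => 1) (x₀ := ω) Filter.univ_mem (Filter.Eventually.of_forall fun w =>
      (by fun_prop : Continuous fun t : ℝ => (t : ℂ) ^ k * exp (I * w * t)).aestronglyMeasurable)
    ((by fun_prop : Continuous fun t : ℝ => (t : ℂ) ^ k * exp (I * ω * t)).intervalIntegrable _ _)
    (by fun_prop :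
      Continuous fun t : ℝ => I * ((t : ℂ) ^ (k + 1) * exp (I * ω * t))).aestronglyMeasurable
    hbound intervalIntegrable_const
    (Filter.Eventually.of_forall fun t _ w _ => hderiv t w)).2
  rwa [intervalIntegral.integral_const_mul] at h

lemma hankel_eq_det (m : ℕ) (ω : ℝ) : hankel m ω = (hankelMatrix (mu ω) m).det := rfl

lemma hasDerivAt_hankel (m : ℕ) (ω : ℝ) :
    HasDerivAt (hankel m) (Complex.I * hankelDetShift (mu ω) m) ω := by
  refine (hasDerivAt_det (A := fun ω => hankelMatrix (mu ω) m)
    (A' := Matrix.of fun j k => Complex.I * mu ω (j + k + 1))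
    fun j k => hasDerivAt_mu (j + k) ω).congr_deriv ?_
  rw [← sum_det_updateCol_hankelMatrix, Finset.mul_sum]
  refine Finset.sum_congr rfl fun k _ => ?_
  rw [← Matrix.det_updateCol_smul]
  rfl

lemma ptil_eq_eval_hankelPoly (m : ℕ) (ω : ℝ) (x : ℂ) :
    ptil m ω x = (hankelPoly (mu ω) m).eval x := by
  rw [eval_hankelPoly, Matrix.cramer_apply, ptil]
  congr 1
  ext j k
  simp [Matrix.updateCol_apply, hankelMatrix, Fin.ext_iff]

/-- Hankel-determinant form of the three-term recurrence (with `n ≥ 1` replaced by the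
shift `n ↦ n + 1`, so the indices `n-1, n, n+1` become `n, n+1, n+2`). -/
theorem stmt8 (n : ℕ) (ω : ℝ) (x : ℂ) :
    ptil (n + 2) ω x * (hankel n ω) ^ 2 =
      (hankel (n + 1) ω * hankel n ω * x +
          Complex.I * (deriv (hankel (n + 1)) ω * hankel n ω -
            deriv (hankel n) ω * hankel (n + 1) ω)) * ptil (n + 1) ω x -
        (hankel (n + 1) ω) ^ 2 * ptil n ω x := by
  have key := congrArg (Polynomial.eval x) (hankelPoly_three_term (mu ω) n)
  simp only [Polynomial.eval_mul, Polynomial.eval_sub, Polynomial.eval_C, Polynomial.eval_X,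
    ← hankel_eq_det] at key
  rw [(hasDerivAt_hankel n ω).deriv, (hasDerivAt_hankel (n + 1) ω).deriv, ptil_eq_eval_hankelPoly,
    ptil_eq_eval_hankelPoly, ptil_eq_eval_hankelPoly]
  linear_combination key - (hankelDetShift (mu ω) (n + 1) * hankel n ω -
    hankelDetShift (mu ω) n * hankel (n + 1) ω) *
      (hankelPoly (mu ω) (n + 1)).eval x * Complex.I_mul_I
end

section
/- Let N ≥ 1 and let ω̂ ∈ ℝ be a critical value at which h_{2N}(ω̂) = 0 while h_{2N−1}(ω̂) ≠ 0. Then the degree-2N orthogonal polynomial satisfies one extra orthogonality condition: ∫_{-1}^{1} p̃_{2N}(x; ω̂) x^k e^{iω̂x} dx = 0 for every k = 0, 1, …, 2N. -/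
open MeasureTheory

lemma integral_ptil (n k : ℕ) (ω : ℝ) :
    (∫ x : ℝ in (-1 : ℝ)..1,
        ptil n ω (x : ℂ) * (x : ℂ) ^ k * Complex.exp (Complex.I * ω * x))
    = Matrix.det (Matrix.of fun j l : Fin (n + 1) =>
        if (l : ℕ) = n then mu ω ((j : ℕ) + k) else mu ω ((j : ℕ) + (l : ℕ))) := by
  have hc : ∀ σ : Equiv.Perm (Fin (n+1)), Continuous fun x : ℝ =>
      ((Equiv.Perm.sign σ : ℤ) : ℂ) *
        (∏ i : Fin (n+1), if (i : ℕ) = n then (x : ℂ) ^ ((σ i : Fin (n+1)) : ℕ)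
          else mu ω (((σ i : Fin (n+1)) : ℕ) + (i : ℕ))) *
        (x : ℂ) ^ k * Complex.exp (Complex.I * ω * x) := by
    intro σ
    apply Continuous.mul
    apply Continuous.mul
    apply Continuous.mul continuous_const
    · apply continuous_finset_prod
      intro i _
      split_ifs
      · fun_prop
      · exact continuous_const
    · fun_prop
    · fun_prop
  simp only [ptil, Matrix.det_apply, Matrix.of_apply, Units.smul_def, zsmul_eq_mul,
    Finset.sum_mul]
  rw [intervalIntegral.integral_finset_sum
    (fun σ _ => ((hc σ).intervalIntegrable (-1 : ℝ) 1))]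
  refine Finset.sum_congr rfl fun σ _ => ?_
  set L : Fin (n + 1) := Fin.last n with hLdef
  have hL : (L : ℕ) = n := rfl
  have hmem : ∀ i ∈ Finset.univ.erase L, (i : ℕ) ≠ n := by
    intro i hi
    have := Finset.ne_of_mem_erase hi
    simpa [Fin.ext_iff, hL] using this
  set C : ℂ := ∏ i ∈ Finset.univ.erase L, mu ω (((σ i : Fin (n+1)) : ℕ) + (i : ℕ)) with hC
  have hprodR : (∏ i : Fin (n+1), if (i : ℕ) = n then mu ω (((σ i : Fin (n+1)) : ℕ) + k)
      else mu ω (((σ i : Fin (n+1)) : ℕ) + (i : ℕ))) = mu ω (((σ L : Fin (n+1)) : ℕ) + k) * C := by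
    rw [← Finset.mul_prod_erase Finset.univ _ (Finset.mem_univ L)]
    rw [if_pos hL]
    congr 1
    exact Finset.prod_congr rfl fun i hi => if_neg (hmem i hi)
  have hprodL : ∀ x : ℝ, (∏ i : Fin (n+1), if (i : ℕ) = n then (x : ℂ) ^ ((σ i : Fin (n+1)) : ℕ)
      else mu ω (((σ i : Fin (n+1)) : ℕ) + (i : ℕ))) = (x : ℂ) ^ ((σ L : Fin (n+1)) : ℕ) * C := by
    intro x
    rw [← Finset.mul_prod_erase Finset.univ _ (Finset.mem_univ L)]
    rw [if_pos hL]
    congr 1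
    exact Finset.prod_congr rfl fun i hi => if_neg (hmem i hi)
  have hint : ∀ x : ℝ,
      ((Equiv.Perm.sign σ : ℤ) : ℂ) *
        (∏ i : Fin (n+1), if (i : ℕ) = n then (x : ℂ) ^ ((σ i : Fin (n+1)) : ℕ)
          else mu ω (((σ i : Fin (n+1)) : ℕ) + (i : ℕ))) *
        (x : ℂ) ^ k * Complex.exp (Complex.I * ω * x)
      = (((Equiv.Perm.sign σ : ℤ) : ℂ) * C) *
        ((x : ℂ) ^ (((σ L : Fin (n+1)) : ℕ) + k) * Complex.exp (Complex.I * ω * x)) := by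
    intro x
    rw [hprodL x, pow_add]
    ring
  simp only [hint]
  rw [intervalIntegral.integral_const_mul, hprodR]
  show ((Equiv.Perm.sign σ : ℤ) : ℂ) * C * mu ω (((σ L : Fin (n+1)) : ℕ) + k) = _
  ring

/-- At a critical value `ω̂` where `h_{2N}(ω̂) = 0` and `h_{2N-1}(ω̂) ≠ 0`, the polynomial
`p̃_{2N}` satisfies one extra orthogonality condition. -/
theorem stmt10 (N : ℕ) (hN : 1 ≤ N) (ω : ℝ)
    (h0 : hankel (2 * N) ω = 0) (h1 : hankel (2 * N - 1) ω ≠ 0) :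
    ∀ k : ℕ, k ≤ 2 * N →
      (∫ x : ℝ in (-1 : ℝ)..1,
        ptil (2 * N) ω (x : ℂ) * (x : ℂ) ^ k * Complex.exp (Complex.I * ω * x)) = 0 := by
  intro k hk
  rw [integral_ptil]
  rcases eq_or_lt_of_le hk with h | h
  · -- k = 2N: the matrix is the Hankel matrix
    rw [← h0]
    unfold hankel
    congr 1
    ext j l
    simp only [Matrix.of_apply]
    split_ifs with hl
    · rw [hl, h]
    · rfl
  · -- k < 2N: two equal columns
    apply Matrix.det_zero_of_column_eq (i := (⟨k, by omega⟩ : Fin (2 * N + 1)))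
      (j := Fin.last (2 * N))
    · intro he
      have := congrArg Fin.val he
      simp at this
      omega
    · intro j
      simp only [Matrix.of_apply, Fin.val_last]
      simp only [ite_self, if_true]
end

section
/- Fix N ≥ 1 and 0 ≤ s ≤ N. Let π = (π_0,…,π_{N−1}) be a permutation of (0,1,…,N−1) and define the N×N matrix E^{[N,s]}(π) over ℚ by E_{i,j} = (π_i + j)!/(π_i! j!) for 0 ≤ i ≤ N−s−1 and E_{i,j} = (π_i + j + 1)!/(π_i! j!) for N−s ≤ i ≤ N−1, with 0 ≤ j ≤ N−1. If (π_0,…,π_{N−s−1}) is a permutation of (0,…,N−s−1) and (π_{N−s},…,π_{N−1}) is a permutation of (N−s,…,N−1), then sgn(π) · det E^{[N,s]}(π) = (N!)² / (s! ((N−s)!)²); otherwise det E^{[N,s]}(π) = 0. -/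
/-!
Put `c i = π i + [i ≥ N - s]`. Row `i` of `E` is `c_i! / π_i!` times the row `(C(c_i + j, j))_j`,
and `C(x + j, j) * j!` is a monic polynomial of degree `j` in `x`, so
`det E * ∏ j! = ∏ (c_i! / π_i!) * V(c)` with `V` the Vandermonde determinant.
`V(c)` vanishes unless `c` is injective. If it is, the image under `π` of the first `N - s` indices
is closed under predecessor (`π i = π i' + 1` with `i'` in the last block would give
`c i = c i'`), so it is `{0, …, N - s - 1}`. Then `c = w ∘ π` with `w` the increasing enumeration
of `{0, …, N} \ {N - s}`, and peeling off the point `0` gives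
`V(w) = (∏_{k ≤ N} k!) / ((N - s)! s!)`.
-/

/-- The matrix `E^{[N,s]}(π)` with entries `(π_i+j)!/(π_i! j!)` in the first `N-s` rows and
`(π_i+j+1)!/(π_i! j!)` in the last `s` rows. -/
noncomputable def Emat (N s : ℕ) (π : Equiv.Perm (Fin N)) : Matrix (Fin N) (Fin N) ℚ :=
  Matrix.of fun i j =>
    if (i : ℕ) < N - s then
      (Nat.factorial ((π i : ℕ) + (j : ℕ)) : ℚ) /
        ((Nat.factorial (π i : ℕ) : ℚ) * (Nat.factorial (j : ℕ) : ℚ))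
    else
      (Nat.factorial ((π i : ℕ) + (j : ℕ) + 1) : ℚ) /
        ((Nat.factorial (π i : ℕ) : ℚ) * (Nat.factorial (j : ℕ) : ℚ))

open Finset Matrix Nat

def succAboveNat (m k : ℕ) : ℕ := if k < m then k else k + 1

lemma succAboveNat_eq_val_succAbove {m n : ℕ} (h : m < n + 1) (k : Fin n) :
    succAboveNat m k = (Fin.succAbove ⟨m, h⟩ k : ℕ) := by
  unfold succAboveNat Fin.succAbove
  split_ifs <;> simp_all [Fin.lt_def]; omega

lemma prod_succAboveNat_mul {M : Type*} [CommMonoid M] (f : ℕ → M) {m n : ℕ} (h : m ≤ n) :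
    (∏ k : Fin n, f (succAboveNat m k)) * f m = ∏ k ∈ range (n + 1), f k := by
  rw [← Fin.prod_univ_eq_prod_range, Fin.prod_univ_succAbove _ ⟨m, Nat.lt_succ_of_le h⟩,
    mul_comm]
  simp only [succAboveNat_eq_val_succAbove (Nat.lt_succ_of_le h)]

theorem Matrix.det_vandermonde_cons {R : Type*} [CommRing R] {n : ℕ} (a : R) (v : Fin n → R) :
    (vandermonde (Fin.cons a v : Fin (n + 1) → R)).det =
      (∏ i, (v i - a)) * (vandermonde v).det := by
  rw [det_vandermonde, det_vandermonde, Fin.prod_univ_succ, Fin.Ioi_zero_eq_map]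
  simp

theorem det_vandermonde_succAboveNat (R : Type*) [CommRing R] {m N : ℕ} (h : m ≤ N) :
    (vandermonde fun k : Fin N => (succAboveNat m k : R)).det * (m ! * (N - m)! : R) = sf N := by
  induction m generalizing N with
  | zero =>
    rcases N with _ | n
    · simp
    · have : (fun k : Fin (n + 1) => (succAboveNat 0 k : R)) =
          fun k : Fin (n + 1) => ((k : ℕ) : R) + 1 := by
        ext k; simp [succAboveNat]
      rw [this, det_vandermonde_add, det_vandermonde_id_eq_superFactorial, superFactorial_succ]
      push_cast; ring
  | succ m ih =>
    obtain ⟨n, rfl⟩ : ∃ n, N = n + 1 := ⟨N - 1, by omega⟩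
    have hmn : m ≤ n := by omega
    have hcons : (fun k : Fin (n + 1) => (succAboveNat (m + 1) k : R)) =
        Fin.cons 0 fun k : Fin n => (succAboveNat m k : R) + 1 := by
      ext k
      refine Fin.cases ?_ (fun k => ?_) k
      · simp [succAboveNat]
      · simp only [Fin.cons_succ, Fin.val_succ, succAboveNat, add_lt_add_iff_right]
        split_ifs <;> push_cast <;> ring
    have hprod : (∏ k : Fin n, ((succAboveNat m k : R) + 1)) * (m + 1) = (n + 1)! := by
      have := congrArg (Nat.cast (R := R))
        ((prod_succAboveNat_mul (fun k => k + 1) hmn).trans (prod_range_add_one_eq_factorial _))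
      push_cast at this
      exact this
    rw [hcons, det_vandermonde_cons, det_vandermonde_add, superFactorial_succ,
      Nat.cast_mul, ← ih hmn, ← hprod, show n + 1 - (m + 1) = n - m by omega, factorial_succ]
    simp only [sub_zero]
    push_cast; ring

theorem det_factorial_add_div_mul_prod_factorial {K : Type*} [Field K] [CharZero K] {n : ℕ}
    (c a : Fin n → ℕ) :
    (of fun i j : Fin n => ((c i + j)! : K) / ((a i)! * (j : ℕ)!)).det * ∏ j : Fin n, ((j : ℕ)! : K)
      = (∏ i, ((c i)! / (a i)! : K)) * (vandermonde fun i => (c i : K)).det := by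
  have hentry : (of fun i (j : Fin n) => ((j : ℕ)! : K) *
        of (fun i j : Fin n => ((c i + j)! : K) / ((a i)! * (j : ℕ)!)) i j)
      = of fun i j => ((c i)! / (a i)! : K) *
          of (fun i j : Fin n => (ascPochhammer K j).eval ((c i : K) + 1)) i j := by
    ext i j
    have hasc := ascPochhammer_nat_eq_natCast_ascFactorial K (c i + 1) j
    push_cast at hasc
    have hj : ((j : ℕ)! : K) ≠ 0 := Nat.cast_ne_zero.mpr (factorial_ne_zero _)
    simp only [of_apply, hasc, ← factorial_mul_ascFactorial (c i) j]
    push_cast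
    field_simp
  rw [mul_comm, ← det_mul_row, hentry, det_mul_column,
    ← det_eval_matrixOfPolynomials_eq_det_vandermonde _ _ (fun j => ascPochhammer_natDegree K j)
      (fun j => monic_ascPochhammer K j), det_vandermonde_add]

theorem Finset.lt_card_of_forall_sub_one_mem {S : Finset ℕ} (hS : ∀ a ∈ S, a - 1 ∈ S) {a : ℕ}
    (ha : a ∈ S) : a < #S := by
  have hdown : ∀ d, a - d ∈ S := by
    intro d
    induction d with
    | zero => simpa using ha
    | succ d ih => rw [Nat.sub_add_eq]; exact hS _ ih
  have hsub : range (a + 1) ⊆ S := fun k hk => by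
    simpa [show a - (a - k) = k by grind] using hdown (a - k)
  simpa using card_le_card hsub

theorem Equiv.Perm.mem_of_apply_mem {α : Type*} [Finite α] (σ : Equiv.Perm α) {s : Set α}
    (hs : Set.MapsTo σ s s) {a : α} (ha : σ a ∈ s) : a ∈ s := by
  obtain ⟨b, hb, hba⟩ := ((Set.toFinite s).injOn_iff_bijOn_of_mapsTo hs).mp σ.injective.injOn
    |>.surjOn ha
  rwa [← σ.injective hba]

namespace Emat

def node (N s : ℕ) (π : Equiv.Perm (Fin N)) (i : Fin N) : ℕ :=
  π i + if (i : ℕ) < N - s then 0 else 1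

variable {N s : ℕ} {π : Equiv.Perm (Fin N)}

theorem eq_of_node :
    Emat N s π =
      of fun i (j : Fin N) => ((node N s π i + j)! : ℚ) / ((π i : ℕ)! * (j : ℕ)!) := by
  ext i j
  simp only [Emat, node, of_apply]
  split_ifs <;> simp only [add_zero, add_right_comm]

theorem det_mul_prod_factorial :
    (Emat N s π).det * ∏ j : Fin N, ((j : ℕ)! : ℚ) =
      (∏ i, ((node N s π i)! / (π i : ℕ)! : ℚ)) *
        (vandermonde fun i => (node N s π i : ℚ)).det := by
  rw [eq_of_node]
  exact det_factorial_add_div_mul_prod_factorial _ _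

theorem injective_node_of_det_ne_zero (h : (Emat N s π).det ≠ 0) :
    Function.Injective (node N s π) := by
  have hV : (vandermonde fun i => (node N s π i : ℚ)).det ≠ 0 := by
    intro hV
    apply h
    have := det_mul_prod_factorial (s := s) (π := π)
    rw [hV, mul_zero] at this
    exact (mul_eq_zero.mp this).resolve_right
      (prod_ne_zero_iff.mpr fun j _ => Nat.cast_ne_zero.mpr (factorial_ne_zero _))
  exact (det_vandermonde_ne_zero_iff.mp hV).of_comp (f := Nat.cast)

theorem lt_of_injective_node (h : Function.Injective (node N s π)) (i : Fin N)
    (hi : (i : ℕ) < N - s) : (π i : ℕ) < N - s := by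
  set S := ({i : Fin N | (i : ℕ) < N - s} : Finset (Fin N)).image fun i => (π i : ℕ)
  have hcard : #S = N - s := by
    rw [card_image_of_injective _ (f := fun i => (π i : ℕ)) (Fin.val_injective.comp π.injective),
      Fin.card_filter_val_lt]
    omega
  have hpred : ∀ a ∈ S, a - 1 ∈ S := by
    simp only [S, mem_image, mem_filter, mem_univ, true_and]
    rintro _ ⟨i, hi, rfl⟩
    rcases Nat.eq_zero_or_pos (π i : ℕ) with h0 | hpos
    · exact ⟨i, hi, by omega⟩
    set i' := π.symm ⟨π i - 1, by omega⟩ with hi'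
    have hπi' : (π i' : ℕ) = π i - 1 := by simp [hi']
    refine ⟨i', ?_, hπi'⟩
    by_contra hi'm
    have : node N s π i' = node N s π i := by
      simp only [node, hi, hi'm, if_true, if_false, hπi']
      omega
    exact hi'm (h this ▸ hi)
  rw [← hcard]
  exact lt_card_of_forall_sub_one_mem hpred (mem_image_of_mem _ (by simpa using hi))

theorem node_eq_succAboveNat (h : ∀ i : Fin N, (i : ℕ) < N - s → (π i : ℕ) < N - s) :
    node N s π = fun i => succAboveNat (N - s) (π i) := by
  funext i
  have hiff : (i : ℕ) < N - s ↔ (π i : ℕ) < N - s :=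
    ⟨h i, fun hπi => π.mem_of_apply_mem (s := {i | (i : ℕ) < N - s}) h hπi⟩
  simp only [node, succAboveNat, hiff]
  split_ifs <;> rfl

theorem sign_mul_det_mul_prod_factorial
    (h : ∀ i : Fin N, (i : ℕ) < N - s → (π i : ℕ) < N - s) :
    ((Equiv.Perm.sign π : ℤ) : ℚ) * (Emat N s π).det * ∏ j : Fin N, ((j : ℕ)! : ℚ) =
      (∏ k : Fin N, ((succAboveNat (N - s) k)! / (k : ℕ)! : ℚ)) *
        (vandermonde fun k : Fin N => (succAboveNat (N - s) k : ℚ)).det := by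
  have hV : (vandermonde fun i => (succAboveNat (N - s) (π i) : ℚ)) =
      (vandermonde fun k : Fin N => (succAboveNat (N - s) k : ℚ)).submatrix π id := rfl
  have hsign : ((Equiv.Perm.sign π : ℤ) : ℚ) * ((Equiv.Perm.sign π : ℤ) : ℚ) = 1 := by
    rw [← Int.cast_mul, ← Units.val_mul, Int.units_mul_self, Units.val_one, Int.cast_one]
  rw [mul_assoc, det_mul_prod_factorial, node_eq_succAboveNat h, hV, det_permute,
    Equiv.prod_comp π fun k => ((succAboveNat (N - s) k)! / (k : ℕ)! : ℚ)]
  linear_combination (∏ k : Fin N, ((succAboveNat (N - s) k)! / (k : ℕ)! : ℚ)) *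
    (vandermonde fun k : Fin N => (succAboveNat (N - s) k : ℚ)).det * hsign

end Emat

theorem prod_factorial_succAboveNat_div_mul_det_vandermonde {N s : ℕ} (hs : s ≤ N) :
    (∏ k : Fin N, ((succAboveNat (N - s) k)! / (k : ℕ)! : ℚ)) *
        (vandermonde fun k : Fin N => (succAboveNat (N - s) k : ℚ)).det =
      (N ! : ℚ) ^ 2 / ((s ! : ℚ) * ((N - s)! : ℚ) ^ 2) * ∏ j : Fin N, ((j : ℕ)! : ℚ) := by
  have hG : (∏ k : Fin N, ((succAboveNat (N - s) k)! : ℚ)) * ((N - s)! : ℚ) = sf N := by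
    exact_mod_cast (prod_succAboveNat_mul factorial (Nat.sub_le N s)).trans
      (prod_range_succ_factorial N)
  have hF : (∏ k : Fin N, ((k : ℕ)! : ℚ)) * (N ! : ℚ) = sf N := by
    rw [Fin.prod_univ_eq_prod_range (fun k => (k ! : ℚ)), ← prod_range_succ (fun k => (k ! : ℚ)),
      ← prod_range_succ_factorial N]
    push_cast
    rfl
  have hD := det_vandermonde_succAboveNat ℚ (Nat.sub_le N s)
  rw [Nat.sub_sub_self hs] at hD
  have hsf : (sf N : ℚ) ≠ 0 := by
    rw [← prod_range_succ_factorial]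
    exact Nat.cast_ne_zero.mpr (prod_ne_zero_iff.mpr fun k _ => factorial_ne_zero k)
  rw [prod_div_distrib]
  field_simp
  linear_combination
    (vandermonde fun k : Fin N => (succAboveNat (N - s) k : ℚ)).det * ((N - s)! * s ! : ℚ) * hG +
    (sf N : ℚ) * hD - ((∏ k : Fin N, ((k : ℕ)! : ℚ)) * N ! + sf N) * hF

theorem stmt11_general (N s : ℕ) (hs : s ≤ N) (π : Equiv.Perm (Fin N)) :
    ((∀ i : Fin N, (i : ℕ) < N - s → ((π i : ℕ) < N - s)) →
      ((Equiv.Perm.sign π : ℤ) : ℚ) * (Emat N s π).det =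
        (N.factorial : ℚ) ^ 2 / ((s.factorial : ℚ) * ((N - s).factorial : ℚ) ^ 2)) ∧
    ((¬ ∀ i : Fin N, (i : ℕ) < N - s → ((π i : ℕ) < N - s)) →
      (Emat N s π).det = 0) := by
  refine ⟨fun hπ => ?_, fun hπ => ?_⟩
  · have hprod : ∏ j : Fin N, ((j : ℕ)! : ℚ) ≠ 0 :=
      prod_ne_zero_iff.mpr fun j _ => Nat.cast_ne_zero.mpr (factorial_ne_zero _)
    apply mul_right_cancel₀ hprod
    rw [Emat.sign_mul_det_mul_prod_factorial hπ,
      prod_factorial_succAboveNat_div_mul_det_vandermonde hs]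
  · by_contra hdet
    exact hπ (Emat.lt_of_injective_node (Emat.injective_node_of_det_ne_zero hdet))

theorem stmt11 (N s : ℕ) (hN : 1 ≤ N) (hs : s ≤ N) (π : Equiv.Perm (Fin N)) :
    ((∀ i : Fin N, (i : ℕ) < N - s → ((π i : ℕ) < N - s)) →
      ((Equiv.Perm.sign π : ℤ) : ℚ) * (Emat N s π).det =
        (N.factorial : ℚ) ^ 2 / ((s.factorial : ℚ) * ((N - s).factorial : ℚ) ^ 2)) ∧
    ((¬ ∀ i : Fin N, (i : ℕ) < N - s → ((π i : ℕ) < N - s)) →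
      (Emat N s π).det = 0) :=
  stmt11_general N s hs π
end

section
/- For every N ≥ 1 and every 0 ≤ s ≤ N, the N×N matrix C^{[N,s]} with entries C_{i,j} = binom(i+j, i) for 0 ≤ i ≤ N−s−1 and C_{i,j} = binom(i+j+1, i+1) for N−s ≤ i ≤ N−1, where 0 ≤ j ≤ N−1, has determinant det C^{[N,s]} = binom(N, s). -/
/-!
Let `P` be the lower unitriangular Pascal matrix, `P i k = choose i k`. Vandermonde's identity
`choose (r + j) r = ∑ k, choose r k * choose j k` factors `C^{[N,s]}` as `A * Pᵀ`, where `A` is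
the `(N + 1) × (N + 1)` Pascal matrix with row `N - s` and the last column deleted. As
`det P = 1`, the minor `det A` is up to sign the `(N, N - s)` entry of
`P⁻¹ = ((-1) ^ (i + k) * choose i k)`, i.e. `choose N (N - s)`.
-/

open Finset Matrix

theorem Nat.add_choose_eq_sum_range_choose_mul_choose (a b : ℕ) :
    (a + b).choose a = ∑ k ∈ range (b + 1), a.choose k * b.choose k := by
  rw [Nat.choose_symm_add, Nat.add_choose_eq, Nat.sum_antidiagonal_eq_sum_range_succ_mk]
  refine sum_congr rfl fun k hk => ?_
  rw [Nat.choose_symm (mem_range_succ_iff.mp hk)]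

theorem Nat.sum_fin_choose_mul_choose {n : ℕ} (a : ℕ) (j : Fin n) :
    ∑ k : Fin n, a.choose k * (j : ℕ).choose k = (a + j).choose a := by
  rw [Fin.sum_univ_eq_sum_range (fun k => a.choose k * (j : ℕ).choose k),
    Nat.add_choose_eq_sum_range_choose_mul_choose]
  refine (sum_subset (range_subset_range.mpr j.isLt) fun k _ hk => ?_).symm
  rw [Nat.choose_eq_zero_of_lt (n := j) (by simpa using hk), mul_zero]

theorem sum_range_choose_mul_signed_choose (r k : ℕ) :
    ∑ t ∈ Finset.range (r + 1), (r.choose t * ((-1) ^ (t + k) * t.choose k) : ℤ) =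
      if r = k then 1 else 0 := by
  rcases lt_or_ge r k with hrk | hkr
  · rw [if_neg hrk.ne]
    refine sum_eq_zero fun t ht => ?_
    rw [Nat.choose_eq_zero_of_lt ((mem_range_succ_iff.mp ht).trans_lt hrk)]
    simp
  obtain ⟨d, rfl⟩ := Nat.exists_eq_add_of_le hkr
  rw [← sum_range_add_sum_Ico _ (by omega : k ≤ k + d + 1), sum_Ico_eq_sum_range,
    show k + d + 1 - k = d + 1 by omega]
  have hlow : ∑ t ∈ range k, ((k + d).choose t * ((-1) ^ (t + k) * t.choose k) : ℤ) = 0 :=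
    sum_eq_zero fun t ht => by simp [Nat.choose_eq_zero_of_lt (mem_range.mp ht)]
  -- `choose_mul` leaves an alternating row sum of Pascal's triangle.
  have hterm : ∀ u, ((k + d).choose (k + u) * ((-1) ^ (k + u + k) * (k + u).choose k) : ℤ) =
      (k + d).choose k * ((-1) ^ u * d.choose u) := by
    intro u
    rcases le_or_gt u d with hud | hud
    · have h := Nat.choose_mul (n := k + d) (k := k + u) (s := k) (by omega)
      rw [show k + d - k = d by omega, show k + u - k = u by omega] at h
      rw [show k + u + k = u + 2 * k by ring, pow_add, pow_mul, neg_one_sq, one_pow, mul_one]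
      have h : ((k + d).choose (k + u) * (k + u).choose k : ℤ) =
          (k + d).choose k * d.choose u := by
        exact_mod_cast h
      linear_combination (-1 : ℤ) ^ u * h
    · simp [Nat.choose_eq_zero_of_lt hud, Nat.choose_eq_zero_of_lt (by omega : k + d < k + u)]
  simp_rw [hlow, zero_add, hterm, ← mul_sum, Int.alternating_sum_range_choose]
  split_ifs <;> simp_all

theorem Fin.val_succAbove_eq_ite {n : ℕ} (p : Fin (n + 1)) (i : Fin n) :
    (p.succAbove i : ℕ) = if (i : ℕ) < p then (i : ℕ) else (i : ℕ) + 1 := by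
  unfold Fin.succAbove
  split_ifs <;> simp_all [Fin.lt_def]

def pascalMatrix (n : ℕ) (R : Type*) [NatCast R] : Matrix (Fin n) (Fin n) R :=
  of fun i j => ((i : ℕ).choose j : R)

def signedPascalMatrix (n : ℕ) (R : Type*) [Ring R] : Matrix (Fin n) (Fin n) R :=
  of fun i j => (-1) ^ (i + j : ℕ) * ((i : ℕ).choose j : R)

variable {R : Type*} [CommRing R]

theorem det_pascalMatrix (n : ℕ) : (pascalMatrix n R).det = 1 := by
  rw [det_of_isLowerTriangular]
  · exact prod_eq_one fun i _ => by simp [pascalMatrix]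
  · intro i j hij
    simp [pascalMatrix, Nat.choose_eq_zero_of_lt (show (i : ℕ) < j from hij)]

theorem pascalMatrix_mul_signedPascalMatrix (n : ℕ) :
    pascalMatrix n R * signedPascalMatrix n R = 1 := by
  ext r k
  have h := congrArg (Int.cast : ℤ → R) (sum_range_choose_mul_signed_choose r k)
  simp only [mul_apply, one_apply, Fin.ext_iff, pascalMatrix, signedPascalMatrix, of_apply]
  rw [Fin.sum_univ_eq_sum_range
      (fun t => ((r : ℕ).choose t : R) * ((-1) ^ (t + k) * (t.choose k : R))),
    ← sum_subset (range_subset_range.mpr r.isLt) fun t _ ht => ?_]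
  · push_cast at h
    exact h
  · rw [Nat.choose_eq_zero_of_lt (n := r) (by simpa using ht), Nat.cast_zero, zero_mul]

theorem adjugate_pascalMatrix (n : ℕ) :
    (pascalMatrix n R).adjugate = signedPascalMatrix n R := by
  rw [← inv_eq_right_inv (pascalMatrix_mul_signedPascalMatrix n), Matrix.inv_def,
    det_pascalMatrix, Ring.inverse_one, one_smul]

theorem det_pascalMatrix_submatrix_succAbove_castSucc (n : ℕ) (m : Fin (n + 1)) :
    ((pascalMatrix (n + 1) R).submatrix m.succAbove Fin.castSucc).det = n.choose m := by
  have h := adjugate_fin_succ_eq_det_submatrix (pascalMatrix (n + 1) R) (Fin.last n) m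
  rw [adjugate_pascalMatrix, Fin.succAbove_last] at h
  simp only [signedPascalMatrix, of_apply, Fin.val_last] at h
  rw [← one_mul (det _), ← (Even.add_self (m + n : ℕ)).neg_one_pow, pow_add, mul_assoc, ← h,
    add_comm (m : ℕ), ← mul_assoc, ← pow_add, (Even.add_self _).neg_one_pow, one_mul]

theorem submatrix_pascalMatrix_mul_transpose_pascalMatrix {ι : Type*} {n : ℕ}
    (f : ι → Fin (n + 1)) :
    (pascalMatrix (n + 1) R).submatrix f Fin.castSucc * (pascalMatrix n R)ᵀ =
      of fun i (j : Fin n) => (((f i : ℕ) + j).choose (f i) : R) := by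
  ext i j
  simp only [mul_apply, submatrix_apply, transpose_apply, pascalMatrix, of_apply, Fin.val_castSucc]
  rw [← Nat.sum_fin_choose_mul_choose (f i) j]
  push_cast
  rfl

theorem stmt12_general (N s : ℕ) (hs : s ≤ N) :
    Matrix.det (Matrix.of fun i j : Fin N =>
      if (i : ℕ) < N - s then (Nat.choose ((i : ℕ) + (j : ℕ)) (i : ℕ) : ℚ)
      else (Nat.choose ((i : ℕ) + (j : ℕ) + 1) ((i : ℕ) + 1) : ℚ)) =
    (Nat.choose N s : ℚ) := by
  set m : Fin (N + 1) := ⟨N - s, by omega⟩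
  have hC : (Matrix.of fun i j : Fin N =>
      if (i : ℕ) < N - s then (Nat.choose ((i : ℕ) + (j : ℕ)) (i : ℕ) : ℚ)
      else (Nat.choose ((i : ℕ) + (j : ℕ) + 1) ((i : ℕ) + 1) : ℚ)) =
      (pascalMatrix (N + 1) ℚ).submatrix m.succAbove Fin.castSucc * (pascalMatrix N ℚ)ᵀ := by
    rw [submatrix_pascalMatrix_mul_transpose_pascalMatrix]
    ext i j
    simp only [of_apply, Fin.val_succAbove_eq_ite, m]
    split_ifs
    · rfl
    · rw [Nat.add_right_comm]
  rw [hC, det_mul, det_transpose, det_pascalMatrix, mul_one,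
    det_pascalMatrix_submatrix_succAbove_castSucc, Nat.choose_symm hs]

theorem stmt12 (N s : ℕ) (hN : 1 ≤ N) (hs : s ≤ N) :
    Matrix.det (Matrix.of fun i j : Fin N =>
      if (i : ℕ) < N - s then (Nat.choose ((i : ℕ) + (j : ℕ)) (i : ℕ) : ℚ)
      else (Nat.choose ((i : ℕ) + (j : ℕ) + 1) ((i : ℕ) + 1) : ℚ)) =
    (Nat.choose N s : ℚ) :=
  stmt12_general N s hs
end

section
/- For every N ≥ 1 and every 0 ≤ s ≤ N, ∑_{p ∈ {0,1}^N, p_0+⋯+p_{N−1} = s} ∑_{π₃ ∈ S_N} ∑_{π₄ ∈ S_N} sgn(π₃) sgn(π₄) ∏_{i=0}^{N−1} (π₃(i) + π₄(i) + p_i)! / (π₃(i)! π₄(i)!) = (N!)³ / (s! ((N−s)!)²). -/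
/-!
For fixed `S` and `π₃`, the sum over `π₄` is the determinant of the matrix
`A_T j k = (j + k + [j ∈ T])! / (j! k!)` with `T = π₃ S`, so the left side is
`N! * ∑_{|T| = s} det A_T`. Writing `x_j = j + [j ∈ T]`, the quotient `(x_j + k)! / x_j!` is the
rising factorial `(x_j + 1) ⋯ (x_j + k)`, a monic polynomial of degree `k` in `x_j`, so `det A_T` is
a multiple of the Vandermonde determinant of `x`. It therefore vanishes unless `x` is injective,
that is unless `T = {N - s, …, N - 1}`; then `x` enumerates `{0, …, N} \ {N - s}`, and deleting one
node from the Vandermonde determinant `0! 1! ⋯ N!` of `0, …, N` divides it by `(N - s)! s!`.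
-/

open Finset Matrix Polynomial Equiv
open scoped Nat

theorem Fin.val_succAbove {n : ℕ} (p : Fin (n + 1)) (j : Fin n) :
    (p.succAbove j : ℕ) = if (j : ℕ) < p then (j : ℕ) else (j : ℕ) + 1 := by
  unfold Fin.succAbove
  split_ifs <;> simp_all [Fin.lt_def]

theorem Fin.prod_val_succAbove_sub {R : Type*} [CommRing R] {n : ℕ} (p : Fin (n + 1)) :
    ∏ j : Fin n, (((p.succAbove j : ℕ) : R) - p) = (-1) ^ (p : ℕ) * (p : ℕ)! * (n - p)! := by
  simp only [Fin.val_succAbove]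
  rw [Fin.prod_univ_eq_prod_range (fun t => ((if t < p then t else t + 1 : ℕ) : R) - p),
    show range n = range (p + (n - p)) by rw [Nat.add_sub_cancel' p.is_le], prod_range_add]
  congr 1
  · rw [← prod_range_add_one_eq_factorial, Nat.cast_prod,
      show (-1 : R) ^ (p : ℕ) = (-1) ^ #(range p) by rw [card_range], ← prod_neg,
      ← prod_range_reflect]
    refine prod_congr rfl fun t ht => ?_
    rw [mem_range] at ht
    rw [if_pos (by omega), Nat.sub_sub, Nat.cast_sub (by omega)]
    push_cast
    ring
  · rw [← prod_range_add_one_eq_factorial, Nat.cast_prod]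
    refine prod_congr rfl fun t _ => ?_
    rw [if_neg (by omega)]
    push_cast
    ring

theorem Matrix.det_vandermonde_succAbove {R : Type*} [CommRing R] {n : ℕ} (v : Fin (n + 1) → R)
    (p : Fin (n + 1)) :
    (-1) ^ (p : ℕ) * (vandermonde v).det =
      (∏ j, (v (p.succAbove j) - v p)) * (vandermonde (v ∘ p.succAbove)).det := by
  have hperm : (vandermonde v).submatrix p.cycleRange.symm id =
      vandermonde (v ∘ p.cycleRange.symm) := rfl
  have hsign := det_permute p.cycleRange.symm (vandermonde v)
  rw [hperm, Equiv.Perm.sign_symm, Fin.sign_cycleRange] at hsign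
  push_cast at hsign
  rw [← hsign, det_vandermonde, det_vandermonde, Fin.prod_univ_succ, Fin.prod_Ioi_zero]
  simp [Fin.prod_Ioi_succ]

theorem Matrix.det_vandermonde_val_succAbove {R : Type*} [CommRing R] {n : ℕ} (p : Fin (n + 1)) :
    (p : ℕ)! * (n - p)! * (vandermonde fun j : Fin n => ((p.succAbove j : ℕ) : R)).det =
      n.superFactorial := by
  have h := det_vandermonde_succAbove (fun i : Fin (n + 1) => ((i : ℕ) : R)) p
  rw [det_vandermonde_id_eq_superFactorial, Fin.prod_val_succAbove_sub, mul_assoc, mul_assoc] at h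
  rw [(isUnit_neg_one.pow _).mul_left_cancel h, mul_assoc]
  rfl

theorem Matrix.det_of_factorial_add_div_factorial_mul {K : Type*} [Field K] [CharZero K] {n : ℕ}
    (x : Fin n → ℕ) :
    (of fun j k : Fin n => ((x j + k)! : K) / ((j : ℕ)! * (k : ℕ)!)).det *
        (∏ j : Fin n, ((j : ℕ)! : K)) ^ 2 =
      (∏ j, ((x j)! : K)) * (vandermonde fun j => (x j : K)).det := by
  have hfac (a : ℕ) : (a ! : K) ≠ 0 := Nat.cast_ne_zero.mpr a.factorial_ne_zero
  have hentry : (of fun j k : Fin n => ((x j + k)! : K) / ((j : ℕ)! * (k : ℕ)!)) =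
      of fun j k => ((x j)! / (j : ℕ)! : K) * (of fun j k : Fin n => ((k : ℕ)! : K)⁻¹ *
        (of fun j k : Fin n => (ascPochhammer K k).eval ((x j : K) + 1)) j k) j k := by
    ext j k
    simp only [of_apply]
    rw [← Nat.cast_succ, ascPochhammer_nat_eq_natCast_ascFactorial,
      ← Nat.factorial_mul_ascFactorial]
    field_simp
    push_cast
    ring
  rw [hentry, det_mul_column, det_mul_row, ← det_eval_matrixOfPolynomials_eq_det_vandermonde _ _
    (ascPochhammer_natDegree K ·) (monic_ascPochhammer K ·), det_vandermonde_add,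
    prod_div_distrib, prod_inv_distrib]
  have hprod : ∏ j : Fin n, ((j : ℕ)! : K) ≠ 0 := prod_ne_zero_iff.mpr fun j _ => hfac j
  field_simp

theorem Matrix.sum_sign_mul_prod_eq_det {n R : Type*} [DecidableEq n] [Fintype n] [CommRing R]
    (A : Matrix n n R) (σ : Perm n) :
    ∑ τ : Perm n, (((Perm.sign σ : ℤ) * (Perm.sign τ : ℤ) : ℤ) : R) * ∏ i, A (σ i) (τ i) =
      A.det := by
  have h := det_permute σ A
  rw [← det_transpose, det_apply] at h
  simp only [transpose_apply, submatrix_apply, id_eq, Units.smul_def, zsmul_eq_mul] at h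
  calc ∑ τ : Perm n, (((Perm.sign σ : ℤ) * (Perm.sign τ : ℤ) : ℤ) : R) * ∏ i, A (σ i) (τ i)
      = (Perm.sign σ : R) * ∑ τ : Perm n, (Perm.sign τ : R) * ∏ i, A (σ i) (τ i) := by
        simp only [mul_sum, Int.cast_mul, mul_assoc]
    _ = A.det := by
        rw [h, ← mul_assoc, ← Int.cast_mul, ← Units.val_mul, Int.units_mul_self, Units.val_one,
          Int.cast_one, one_mul]

theorem Finset.sum_powersetCard_map_equiv {α M : Type*} [Fintype α] [AddCommMonoid M] (e : α ≃ α)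
    (k : ℕ) (f : Finset α → M) :
    ∑ S ∈ powersetCard k univ, f (S.map e.toEmbedding) = ∑ S ∈ powersetCard k univ, f S := by
  conv_rhs => rw [← map_univ_equiv e, powersetCard_map, sum_map]
  rfl

def topIndices (m s : ℕ) : Finset (Fin (m + s)) := {j | m ≤ (j : ℕ)}

@[simp]
theorem mem_topIndices {m s : ℕ} {j : Fin (m + s)} : j ∈ topIndices m s ↔ m ≤ j := by
  simp [topIndices]

theorem card_topIndices (m s : ℕ) : #(topIndices m s) = s := by
  unfold topIndices
  have h := card_filter_add_card_filter_not (s := (univ : Finset (Fin (m + s)))) (· < m)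
  rw [Fin.card_filter_val_lt, Finset.card_fin] at h
  simp only [not_lt] at h
  omega

theorem exists_mem_and_succ_notMem_of_ne_topIndices {m s : ℕ} {T : Finset (Fin (m + s))}
    (hcard : #T = s) (hT : T ≠ topIndices m s) :
    ∃ j : Fin (m + s), ∃ hj : (j : ℕ) + 1 < m + s, j ∈ T ∧ (⟨j + 1, hj⟩ : Fin (m + s)) ∉ T := by
  by_contra! hclosed
  have hIci (j : Fin (m + s)) (hj : j ∈ T) : Ici j ⊆ T := by
    suffices ∀ d (hd : (j : ℕ) + d < m + s), (⟨j + d, hd⟩ : Fin (m + s)) ∈ T by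
      intro k hk
      have := this ((k : ℕ) - j) (by omega)
      rwa [show (⟨j + ((k : ℕ) - j), by omega⟩ : Fin (m + s)) = k from
        Fin.ext (by have := Fin.le_def.mp (mem_Ici.mp hk); simp; omega)] at this
    intro d
    induction d with
    | zero => intro _; exact hj
    | succ d ih => intro hd; exact hclosed _ (by simp; omega) (ih (by omega))
  refine hT (eq_of_subset_of_card_le (fun j hj => ?_) (by rw [card_topIndices, hcard]))
  have := card_le_card (hIci j hj)
  rw [Fin.card_Ici, hcard] at this
  rw [mem_topIndices]
  omega

noncomputable def shiftedPascalMatrix {n : ℕ} (T : Finset (Fin n)) : Matrix (Fin n) (Fin n) ℚ :=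
  of fun j k => (((j : ℕ) + (if j ∈ T then 1 else 0) + k)! : ℚ) / ((j : ℕ)! * (k : ℕ)!)

theorem det_shiftedPascalMatrix_eq_zero {n : ℕ} {T : Finset (Fin n)} {j : Fin n}
    (hj : (j : ℕ) + 1 < n) (hjT : j ∈ T) (hsucc : (⟨j + 1, hj⟩ : Fin n) ∉ T) :
    (shiftedPascalMatrix T).det = 0 := by
  have h := det_of_factorial_add_div_factorial_mul (K := ℚ)
    fun j : Fin n => (j : ℕ) + if j ∈ T then 1 else 0
  have hV : (vandermonde fun i : Fin n => (((i : ℕ) + if i ∈ T then 1 else 0 : ℕ) : ℚ)).det = 0 :=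
    det_vandermonde_eq_zero_iff.mpr
      ⟨j, ⟨j + 1, hj⟩, by simp [hjT, hsucc], fun hne => by simp [Fin.ext_iff] at hne⟩
  rw [hV, mul_zero] at h
  have hprod : ∏ i : Fin n, ((i : ℕ)! : ℚ) ≠ 0 :=
    prod_ne_zero_iff.mpr fun i _ => Nat.cast_ne_zero.mpr i.1.factorial_ne_zero
  exact (mul_eq_zero.mp h).resolve_right (pow_ne_zero 2 hprod)

theorem det_shiftedPascalMatrix_top (m s : ℕ) :
    (shiftedPascalMatrix (topIndices m s)).det =
      ((m + s)! : ℚ) ^ 2 / (s ! * (m ! : ℚ) ^ 2) := by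
  set p : Fin (m + s + 1) := ⟨m, by omega⟩
  have hx (j : Fin (m + s)) : (j : ℕ) + (if j ∈ topIndices m s then 1 else 0) = p.succAbove j := by
    rw [Fin.val_succAbove]
    simp only [mem_topIndices, p]
    split_ifs <;> omega
  have hM : shiftedPascalMatrix (topIndices m s) =
      of fun j k : Fin (m + s) => (((p.succAbove j : ℕ) + k)! : ℚ) / ((j : ℕ)! * (k : ℕ)!) := by
    ext j k
    simp only [shiftedPascalMatrix, of_apply, hx]
  have hdet := det_of_factorial_add_div_factorial_mul (K := ℚ) fun j => (p.succAbove j : ℕ)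
  rw [← hM] at hdet
  have hV := det_vandermonde_val_succAbove (R := ℚ) p
  simp only [p, Nat.add_sub_cancel_left] at hV
  have hX : (∏ j : Fin (m + s), ((p.succAbove j : ℕ)! : ℚ)) * m ! = (m + s).superFactorial := by
    rw [mul_comm, ← Fin.prod_univ_succAbove (fun i : Fin (m + s + 1) => ((i : ℕ)! : ℚ)) p,
      Fin.prod_univ_eq_prod_range (fun i => (i ! : ℚ)), ← Nat.cast_prod,
      Nat.prod_range_succ_factorial]
  have hP : (∏ j : Fin (m + s), ((j : ℕ)! : ℚ)) * (m + s)! = (m + s).superFactorial := by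
    rw [Fin.prod_univ_eq_prod_range (fun i => (i ! : ℚ)), ← Nat.cast_prod, ← Nat.cast_mul,
      ← Nat.prod_range_succ_factorial, prod_range_succ]
  have hfac (a : ℕ) : (a ! : ℚ) ≠ 0 := Nat.cast_ne_zero.mpr a.factorial_ne_zero
  have hprod : (∏ j : Fin (m + s), ((j : ℕ)! : ℚ)) ^ 2 ≠ 0 :=
    pow_ne_zero 2 (prod_ne_zero_iff.mpr fun j _ => hfac j)
  rw [eq_div_iff (by simp [hfac])]
  apply mul_right_cancel₀ hprod
  linear_combination (s ! * (m ! : ℚ) ^ 2) * hdet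
    + ((m ! : ℚ) * s ! * (vandermonde fun j : Fin (m + s) => ((p.succAbove j : ℕ) : ℚ)).det) * hX
    + ((m + s).superFactorial : ℚ) * hV
    - (((m + s).superFactorial : ℚ) + (∏ j : Fin (m + s), ((j : ℕ)! : ℚ)) * (m + s)!) * hP

theorem stmt13_general (N s : ℕ) (hs : s ≤ N) :
    ∑ S ∈ Finset.powersetCard s (Finset.univ : Finset (Fin N)),
      ∑ π₃ : Equiv.Perm (Fin N), ∑ π₄ : Equiv.Perm (Fin N),
        (((Equiv.Perm.sign π₃ : ℤ) * (Equiv.Perm.sign π₄ : ℤ) : ℤ) : ℚ) *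
          ∏ i : Fin N,
            (Nat.factorial ((π₃ i : ℕ) + (π₄ i : ℕ) + if i ∈ S then 1 else 0) : ℚ) /
              ((Nat.factorial (π₃ i : ℕ) : ℚ) * (Nat.factorial (π₄ i : ℕ) : ℚ))
      = (N.factorial : ℚ) ^ 3 / ((s.factorial : ℚ) * ((N - s).factorial : ℚ) ^ 2) := by
  obtain ⟨m, rfl⟩ : ∃ m, N = m + s := ⟨N - s, by omega⟩
  have hentry (S : Finset (Fin (m + s))) (π₃ π₄ : Perm (Fin (m + s))) (i : Fin (m + s)) :
      (((π₃ i : ℕ) + (π₄ i : ℕ) + if i ∈ S then 1 else 0)! : ℚ) /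
          ((π₃ i : ℕ)! * (π₄ i : ℕ)!) =
        shiftedPascalMatrix (S.map π₃.toEmbedding) (π₃ i) (π₄ i) := by
    simp [shiftedPascalMatrix, mem_map_equiv, add_right_comm]
  have htop : topIndices m s ∈ powersetCard s univ :=
    mem_powersetCard_univ.mpr (card_topIndices m s)
  calc _ = ∑ S ∈ powersetCard s univ, ∑ π₃ : Perm (Fin (m + s)),
          (shiftedPascalMatrix (S.map π₃.toEmbedding)).det := by
        simp only [hentry, sum_sign_mul_prod_eq_det]
    _ = (m + s)! * (shiftedPascalMatrix (topIndices m s)).det := by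
        rw [sum_comm]
        simp only [sum_powersetCard_map_equiv _ _ fun T => (shiftedPascalMatrix T).det]
        rw [sum_const, card_univ, Fintype.card_perm, Fintype.card_fin, nsmul_eq_mul,
          sum_eq_single_of_mem _ htop fun T hT hne => ?_]
        obtain ⟨j, hj, hjT, hsucc⟩ :=
          exists_mem_and_succ_notMem_of_ne_topIndices (mem_powersetCard_univ.mp hT) hne
        exact det_shiftedPascalMatrix_eq_zero hj hjT hsucc
    _ = _ := by
        rw [det_shiftedPascalMatrix_top, Nat.add_sub_cancel]
        field_simp

theorem stmt13 (N s : ℕ) (hN : 1 ≤ N) (hs : s ≤ N) :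
    ∑ S ∈ Finset.powersetCard s (Finset.univ : Finset (Fin N)),
      ∑ π₃ : Equiv.Perm (Fin N), ∑ π₄ : Equiv.Perm (Fin N),
        (((Equiv.Perm.sign π₃ : ℤ) * (Equiv.Perm.sign π₄ : ℤ) : ℤ) : ℚ) *
          ∏ i : Fin N,
            (Nat.factorial ((π₃ i : ℕ) + (π₄ i : ℕ) + if i ∈ S then 1 else 0) : ℚ) /
              ((Nat.factorial (π₃ i : ℕ) : ℚ) * (Nat.factorial (π₄ i : ℕ) : ℚ))
      = (N.factorial : ℚ) ^ 3 / ((s.factorial : ℚ) * ((N - s).factorial : ℚ) ^ 2) :=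
  stmt13_general N s hs
end
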